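/- arXiv:2201.00973 — 5 statements merged into one kernel-verified Lean document; each statement's English description precedes it below -/
import Mathlib

section
/- Let r = 2/(1 − c₂) with 0 < c₂ < 1, M > 0, ε_g ≥ 0, ε_f ≥ 0, γ > 0, and Δ̄ = γ/(rM). Suppose ‖g̃‖ > rε_g + γ, ‖B‖ < 2M, and Δ ≤ Δ̄. Then Δ̄ < ‖g̃‖/‖B‖, so min(Δ, ‖g̃‖/‖B‖) = Δ, and moreover (MΔ² + ε_gΔ + 2ε_f)/(½‖g̃‖Δ + rε_f) < 2/r = 1 − c₂. Consequently, if |ρ − 1| is bounded by this quantity, then ρ > c₂. -/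
open scoped Classical

/-- If `‖g̃‖ > rε_g + γ` and `Δ ≤ Δ̄ = γ/(rM)`, then the trust region is the
active term in the min, the ratio bound is below `1 − c₂`, hence `ρ > c₂`. -/
theorem stmt_4 {n : ℕ} (gtil : EuclideanSpace ℝ (Fin n))
    (B : EuclideanSpace ℝ (Fin n) →L[ℝ] EuclideanSpace ℝ (Fin n))
    (c₂ r M εg εf γ Δbar Δ : ℝ)
    (hc₂ : 0 < c₂ ∧ c₂ < 1) (hr : r = 2 / (1 - c₂))
    (hM : 0 < M) (hεg : 0 ≤ εg) (hεf : 0 ≤ εf) (hγ : 0 < γ)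
    (hΔbar : Δbar = γ / (r * M))
    (hg : ‖gtil‖ > r * εg + γ) (hB : ‖B‖ < 2 * M)
    (hΔpos : 0 < Δ) (hΔ : Δ ≤ Δbar) :
    (B ≠ 0 → Δbar < ‖gtil‖ / ‖B‖) ∧
    (if B = 0 then Δ else min Δ (‖gtil‖ / ‖B‖)) = Δ ∧
    (M * Δ ^ 2 + εg * Δ + 2 * εf) / ((1/2) * ‖gtil‖ * Δ + r * εf) < 2 / r ∧
    2 / r = 1 - c₂ ∧
    (∀ ρ : ℝ, |ρ - 1| ≤ (M * Δ ^ 2 + εg * Δ + 2 * εf) /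
        ((1/2) * ‖gtil‖ * (if B = 0 then Δ else min Δ (‖gtil‖ / ‖B‖)) + r * εf) →
      ρ > c₂) := by
  obtain ⟨hc0, hc1⟩ := hc₂
  have h1c : 0 < 1 - c₂ := by linarith
  have hr2 : 2 < r := by
    rw [hr, lt_div_iff₀ h1c]; nlinarith
  have hrpos : 0 < r := by linarith
  have hgpos : 0 < ‖gtil‖ := by nlinarith
  have hΔbarpos : 0 < Δbar := by
    rw [hΔbar]; positivity
  have hkey : r * M * Δ + r * εg < ‖gtil‖ := by
    have : r * M * Δ ≤ γ := by
      have := (le_div_iff₀ (by positivity : (0:ℝ) < r * M)).mp (hΔbar ▸ hΔ)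
      nlinarith
    nlinarith
  have h1 : B ≠ 0 → Δbar < ‖gtil‖ / ‖B‖ := by
    intro hBne
    have hBpos : 0 < ‖B‖ := norm_pos_iff.mpr hBne
    rw [hΔbar, div_lt_div_iff₀ (by positivity) hBpos]
    nlinarith [mul_lt_mul_of_pos_left hB hγ, mul_pos hγ hM,
      mul_lt_mul_of_pos_right hr2 (mul_pos hγ hM)]
  have h2 : (if B = 0 then Δ else min Δ (‖gtil‖ / ‖B‖)) = Δ := by
    by_cases hB0 : B = 0
    · simp [hB0]
    · simp only [hB0, if_false]
      exact min_eq_left (le_of_lt (lt_of_le_of_lt hΔ (h1 hB0)))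
  have hdenom : 0 < (1/2) * ‖gtil‖ * Δ + r * εf := by positivity
  have h3 : (M * Δ ^ 2 + εg * Δ + 2 * εf) / ((1/2) * ‖gtil‖ * Δ + r * εf) < 2 / r := by
    rw [div_lt_div_iff₀ hdenom hrpos]
    nlinarith
  have h4 : 2 / r = 1 - c₂ := by
    rw [hr]; field_simp
  refine ⟨h1, h2, h3, h4, ?_⟩
  intro ρ hρ
  rw [h2] at hρ
  have hb : |ρ - 1| < 1 - c₂ := lt_of_le_of_lt hρ (h4 ▸ h3)
  have := abs_lt.mp hb
  linarith [this.1]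
end

section
/- (Key inequality in Lemma 3.2) Let r > 2, M > 0, ε_g, ε_f ≥ 0, γ > 0 and 0 < Δ ≤ γ/(rM). If G > rε_g + γ, then (MΔ² + ε_gΔ + 2ε_f)/(½GΔ + rε_f) < 2/r. -/
/-- Key inequality in Lemma 3.2. -/
theorem stmt_5 (r M εg εf γ Δ G : ℝ)
    (hr : 2 < r) (hM : 0 < M) (hεg : 0 ≤ εg) (hεf : 0 ≤ εf) (hγ : 0 < γ)
    (hΔpos : 0 < Δ) (hΔ : Δ ≤ γ / (r * M))
    (hG : G > r * εg + γ) :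
    (M * Δ ^ 2 + εg * Δ + 2 * εf) / ((1/2) * G * Δ + r * εf) < 2 / r := by
  have hr0 : (0:ℝ) < r := by linarith
  have hrM : 0 < r * M := by positivity
  have h1 : r * M * Δ ≤ γ := by
    have := (le_div_iff₀ hrM).mp hΔ
    linarith
  have hGpos : 0 < G := by nlinarith
  have hden : 0 < (1/2) * G * Δ + r * εf := by positivity
  rw [div_lt_div_iff₀ hden hr0]
  nlinarith [mul_pos hΔpos hγ, mul_le_mul_of_nonneg_left h1 hΔpos.le]
end

section
/- Consider a sequence Δ_k > 0 evolving under the rule: there exists Δ̄ > 0 and ν > 1 such that whenever Δ_k ≤ Δ̄ one has Δ_{k+1} = νΔ_k, and in all cases Δ_{k+1} ≥ Δ_k/ν. Then there exists K₀ such that Δ_k > Δ̄/ν for all k ≥ K₀. -/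
/-- If small trust regions are always increased by a factor `ν`, and the radius
never shrinks by more than a factor `ν`, then eventually `Δ_k > Δ̄/ν`. -/
theorem stmt_6 (Δ : ℕ → ℝ) (ν Δbar : ℝ) (hν : 1 < ν) (hΔbar : 0 < Δbar)
    (hpos : ∀ k, 0 < Δ k)
    (hincr : ∀ k, Δ k ≤ Δbar → Δ (k + 1) = ν * Δ k)
    (hlow : ∀ k, Δ (k + 1) ≥ Δ k / ν) :
    ∃ K₀ : ℕ, ∀ k ≥ K₀, Δ k > Δbar / ν := by
  have hν0 : (0:ℝ) < ν := lt_trans one_pos hν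
  have step : ∀ k, Δ k > Δbar / ν → Δ (k + 1) > Δbar / ν := by
    intro k hk
    by_cases h : Δ k ≤ Δbar
    · rw [hincr k h]
      have h1 : Δ k ≤ ν * Δ k := le_mul_of_one_le_left (hpos k).le hν.le
      linarith
    · push_neg at h
      have h2 : Δbar / ν < Δ k / ν := by
        apply div_lt_div_of_pos_right h hν0
      linarith [hlow k]
  have ex : ∃ K, Δ K > Δbar / ν := by
    by_contra hcon
    push_neg at hcon
    have hgeo : ∀ k, Δ k = ν ^ k * Δ 0 := by
      intro k
      induction k with
      | zero => simp
      | succ n ih =>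
        have h1 : Δ n ≤ Δbar := le_trans (hcon n) (div_le_self hΔbar.le hν.le)
        rw [hincr n h1, ih, pow_succ]; ring
    obtain ⟨n, hn⟩ := pow_unbounded_of_one_lt ((Δbar / ν) / Δ 0) hν
    have h3 := hcon n
    rw [hgeo n] at h3
    have h4 : (Δbar / ν) / Δ 0 ≥ ν ^ n := by
      rw [ge_iff_le, le_div_iff₀ (hpos 0)]; linarith
    linarith
  obtain ⟨K, hK⟩ := ex
  refine ⟨K, fun k hk => ?_⟩
  induction k, hk using Nat.le_induction with
  | base => exact hK
  | succ n hn ih => exact step n ih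
end

section
/- (Lemma 3.4, Noisy Function Reduction) Suppose ‖g̃_k‖ > rε_g + γ, Δ_k ≥ γ/(νrM), ‖B_k‖ < 2M ≤ rM, the model reduction satisfies m_k(0) − m_k(p_k) ≥ ½‖g̃_k‖min(Δ_k, ‖g̃_k‖/‖B_k‖), and the step is accepted, i.e., (f̃(x_k) − f̃(x_k + p_k) + rε_f)/(m_k(0) − m_k(p_k) + rε_f) > c₀ with 0 < c₀ < 1. If γ = η + μ with μ > 0, η = ½(−rε_g + β), β = √((rε_g)² + 8νr²(1/c₀ − 1)Mε_f), then f̃(x_k) − f̃(x_k + p_k) > (c₀/(2νrM))(μβ + μ²) > 0. -/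
set_option maxHeartbeats 1000000


open scoped Classical

/-- Lemma 3.4 (Noisy Function Reduction): an accepted step with large noisy
gradient and large trust region reduces the noisy objective by a fixed amount. -/
theorem stmt_10 {n : ℕ} (gtil : EuclideanSpace ℝ (Fin n))
    (B : EuclideanSpace ℝ (Fin n) →L[ℝ] EuclideanSpace ℝ (Fin n))
    (r ν M c₀ εg εf μ β η γ Δ mred ftilx ftilxp : ℝ)
    (hr : 2 < r) (hν : 1 < ν) (hM : 0 < M) (hc₀ : 0 < c₀ ∧ c₀ < 1)
    (hεg : 0 ≤ εg) (hεf : 0 ≤ εf) (hμ : 0 < μ)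
    (hβ : β = Real.sqrt ((r * εg) ^ 2 + 8 * ν * r ^ 2 * (1 / c₀ - 1) * M * εf))
    (hη : η = (1/2) * (-(r * εg) + β)) (hγ : γ = η + μ)
    (hΔpos : 0 < Δ)
    (hg : ‖gtil‖ > r * εg + γ)
    (hΔ : Δ ≥ γ / (ν * r * M))
    (hB : ‖B‖ < 2 * M)
    (h2M : 2 * M ≤ r * M)
    (hmred : mred ≥ (1/2) * ‖gtil‖ *
      (if B = 0 then Δ else min Δ (‖gtil‖ / ‖B‖)))
    (hacc : (ftilx - ftilxp + r * εf) / (mred + r * εf) > c₀) :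
    ftilx - ftilxp > (c₀ / (2 * ν * r * M)) * (μ * β + μ ^ 2) ∧
    0 < (c₀ / (2 * ν * r * M)) * (μ * β + μ ^ 2) := by
  obtain ⟨hc0, hc1⟩ := hc₀
  have hc0ne : c₀ ≠ 0 := ne_of_gt hc0
  have hrpos : 0 < r := by linarith
  have hνpos : 0 < ν := by linarith
  have hνrM : 0 < ν * r * M := by positivity
  have h2νrM : 0 < 2 * (ν * r * M) := by positivity
  have hinv : 0 ≤ 1 / c₀ - 1 := by
    rw [sub_nonneg, le_div_iff₀ hc0]
    linarith
  have harg : 0 ≤ (r * εg) ^ 2 + 8 * ν * r ^ 2 * (1 / c₀ - 1) * M * εf := by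
    have h2 : 0 ≤ 8 * ν * r ^ 2 * (1 / c₀ - 1) * M * εf := by positivity
    positivity
  have hβnn : 0 ≤ β := hβ ▸ Real.sqrt_nonneg _
  have hβ2 : β ^ 2 = (r * εg) ^ 2 + 8 * ν * r ^ 2 * (1 / c₀ - 1) * M * εf := by
    rw [hβ, Real.sq_sqrt harg]
  have hβge : r * εg ≤ β := by
    have h2 : 0 ≤ 8 * ν * r ^ 2 * (1 / c₀ - 1) * M * εf := by positivity
    nlinarith [mul_nonneg hrpos.le hεg]
  have hγpos : 0 < γ := by rw [hγ, hη]; linarith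
  have hGpos : 0 < ‖gtil‖ := by
    have : 0 ≤ r * εg := mul_nonneg hrpos.le hεg
    linarith
  -- lower bound on the min term
  have hminlb : γ / (ν * r * M) ≤ (if B = 0 then Δ else min Δ (‖gtil‖ / ‖B‖)) := by
    split_ifs with h0
    · linarith
    · refine le_min (by linarith) ?_
      have hbpos : 0 < ‖B‖ := norm_pos_iff.mpr h0
      have h1 : γ / (ν * r * M) ≤ γ / (2 * M) := by
        apply div_le_div_of_nonneg_left hγpos.le (by positivity)
        nlinarith
      have h2 : γ / (2 * M) ≤ ‖gtil‖ / ‖B‖ := by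
        rw [div_le_div_iff₀ (by positivity) hbpos]
        have hγG : γ ≤ ‖gtil‖ := by
          have : 0 ≤ r * εg := mul_nonneg hrpos.le hεg
          linarith
        calc γ * ‖B‖ ≤ ‖gtil‖ * ‖B‖ := mul_le_mul_of_nonneg_right hγG (norm_nonneg _)
          _ ≤ ‖gtil‖ * (2 * M) := mul_le_mul_of_nonneg_left hB.le hGpos.le
      linarith
  have hmred2 : ‖gtil‖ * γ ≤ 2 * (ν * r * M) * mred := by
    have h1 : (1/2) * ‖gtil‖ * (γ / (ν * r * M)) ≤
        (1/2) * ‖gtil‖ * (if B = 0 then Δ else min Δ (‖gtil‖ / ‖B‖)) := by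
      apply mul_le_mul_of_nonneg_left hminlb (by positivity)
    have h2 : (1/2) * ‖gtil‖ * (γ / (ν * r * M)) ≤ mred := le_trans h1 hmred
    calc ‖gtil‖ * γ = 2 * (ν * r * M) * ((1/2) * ‖gtil‖ * (γ / (ν * r * M))) := by
          field_simp
      _ ≤ 2 * (ν * r * M) * mred := by
          exact mul_le_mul_of_nonneg_left h2 h2νrM.le
  have hmpos : 0 < mred := by
    have := mul_pos hGpos hγpos
    nlinarith
  have hden : 0 < mred + r * εf := by
    have : 0 ≤ r * εf := mul_nonneg hrpos.le hεf
    linarith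
  have hfr : c₀ * (mred + r * εf) < ftilx - ftilxp + r * εf :=
    (lt_div_iff₀ hden).mp hacc
  have hGγ : (r * εg + γ) * γ < ‖gtil‖ * γ :=
    mul_lt_mul_of_pos_right hg hγpos
  -- key algebraic identity (multiplied by c₀ to clear 1/c₀)
  have hkeyc : c₀ * ((r * εg + γ) * γ) =
      c₀ * (μ * β + μ ^ 2) + 2 * ν * r ^ 2 * (1 - c₀) * M * εf := by
    subst hγ hη
    have h : c₀ * β ^ 2 = c₀ * (r * εg) ^ 2 + 8 * ν * r ^ 2 * (1 - c₀) * M * εf := by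
      rw [hβ2]; field_simp
    nlinarith [h]
  have hfinal : c₀ * (μ * β + μ ^ 2) < 2 * (ν * r * M) * (ftilx - ftilxp) := by
    have p1 := mul_lt_mul_of_pos_left hfr h2νrM
    have p2 := mul_le_mul_of_nonneg_left hmred2 hc0.le
    have p3 := mul_lt_mul_of_pos_left hGγ hc0
    nlinarith [p1, p2, p3]
  constructor
  · have h2 : c₀ * (μ * β + μ ^ 2) / (2 * (ν * r * M)) < ftilx - ftilxp :=
      (div_lt_iff₀ h2νrM).mpr (by linarith)
    calc (c₀ / (2 * ν * r * M)) * (μ * β + μ ^ 2)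
        = c₀ * (μ * β + μ ^ 2) / (2 * (ν * r * M)) := by ring
      _ < ftilx - ftilxp := h2
  · have h1 : 0 < μ * β + μ ^ 2 := by nlinarith [mul_nonneg hμ.le hβnn]
    have h2 : 0 < c₀ / (2 * ν * r * M) := by positivity
    exact mul_pos h2 h1
end

section
/- (Function increase bound along short steps) Let f have L-Lipschitz gradient g, and suppose points x_K, …, x_{K+l̂+1} satisfy ‖x_{K+i+1} − x_{K+i}‖ ≤ Δ_{K+i} for each i, where Σ_{j=0}^{l̂+1} Δ_{K+j} < S. Then for every k with K+1 ≤ k ≤ K+l̂+1, |f(x_k) − f(x_K)| ≤ Σ_{i=0}^{l̂} Δ_{K+i}(‖g(x_{K+i})‖ + LΔ_{K+i}) < S(‖g(x_K)‖ + LS). -/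
/-- Function increase bound along short steps. -/
theorem stmt_14 {n : ℕ} (f : EuclideanSpace ℝ (Fin n) → ℝ)
    (g : EuclideanSpace ℝ (Fin n) → EuclideanSpace ℝ (Fin n))
    (L S : ℝ) (hL : 0 < L) (hS : 0 < S)
    (hf : ContDiff ℝ 1 f) (hg : ∀ y, HasGradientAt f (g y) y)
    (hLip : ∀ y z, ‖g y - g z‖ ≤ L * ‖y - z‖)
    (x : ℕ → EuclideanSpace ℝ (Fin n)) (Δ : ℕ → ℝ) (hpos : ∀ k, 0 < Δ k)
    (K lhat : ℕ)
    (hstep : ∀ i ≤ lhat, ‖x (K + i + 1) - x (K + i)‖ ≤ Δ (K + i))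
    (hsum : ∑ j ∈ Finset.range (lhat + 2), Δ (K + j) < S) :
    (∀ k, K + 1 ≤ k → k ≤ K + lhat + 1 →
      |f (x k) - f (x K)| ≤
        ∑ i ∈ Finset.range (lhat + 1), Δ (K + i) * (‖g (x (K + i))‖ + L * Δ (K + i))) ∧
    (∑ i ∈ Finset.range (lhat + 1), Δ (K + i) * (‖g (x (K + i))‖ + L * Δ (K + i))
      < S * (‖g (x K)‖ + L * S)) := by
  have hterm_nonneg : ∀ i, 0 ≤ Δ (K + i) * (‖g (x (K + i))‖ + L * Δ (K + i)) := by
    intro i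
    have := hpos (K + i)
    positivity
  -- per-step bound via mean value inequality on the segment
  have hfs : ∀ i ≤ lhat, |f (x (K + i + 1)) - f (x (K + i))|
      ≤ Δ (K + i) * (‖g (x (K + i))‖ + L * Δ (K + i)) := by
    intro i hi
    set a := x (K + i) with ha
    set b := x (K + i + 1) with hb
    set C := ‖g a‖ + L * Δ (K + i) with hC
    have hseg : ∀ z ∈ segment ℝ a b, ‖z - a‖ ≤ ‖b - a‖ := by
      intro z hz
      obtain ⟨u, v, hu, hv, huv, rfl⟩ := hz
      have : u • a + v • b - a = v • (b - a) := by
        rw [show u = 1 - v by linarith, sub_smul, one_smul, smul_sub]; abel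
      rw [this, norm_smul, Real.norm_eq_abs, abs_of_nonneg hv]
      nlinarith [norm_nonneg (b - a)]
    have hbound : ∀ z ∈ segment ℝ a b,
        ‖(InnerProductSpace.toDual ℝ (EuclideanSpace ℝ (Fin n))) (g z)‖ ≤ C := by
      intro z hz
      rw [LinearIsometryEquiv.norm_map]
      have h1 : ‖g z‖ - ‖g a‖ ≤ ‖g z - g a‖ := norm_sub_norm_le _ _
      have h2 : ‖g z - g a‖ ≤ L * ‖z - a‖ := hLip z a
      have h3 : ‖z - a‖ ≤ ‖b - a‖ := hseg z hz
      have h4 : ‖b - a‖ ≤ Δ (K + i) := hstep i hi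
      nlinarith
    have hmv : ‖f b - f a‖ ≤ C * ‖b - a‖ :=
      (convex_segment a b).norm_image_sub_le_of_norm_hasFDerivWithin_le
        (fun z _ => (hg z).hasFDerivAt.hasFDerivWithinAt) hbound
        (left_mem_segment ℝ a b) (right_mem_segment ℝ a b)
    have hC0 : 0 ≤ C := by
      have := (hpos (K + i)).le
      have := norm_nonneg (g a)
      positivity
    have h4 : ‖b - a‖ ≤ Δ (K + i) := hstep i hi
    calc |f b - f a| = ‖f b - f a‖ := (Real.norm_eq_abs _).symm
      _ ≤ C * ‖b - a‖ := hmv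
      _ ≤ C * Δ (K + i) := by nlinarith [norm_nonneg (b - a)]
      _ = Δ (K + i) * C := mul_comm _ _
  constructor
  · intro k h1 h2
    obtain ⟨m, rfl⟩ := Nat.exists_eq_add_of_le (show K ≤ k by omega)
    have hm1 : 1 ≤ m := by omega
    have hm2 : m ≤ lhat + 1 := by omega
    have htel : f (x (K + m)) - f (x K)
        = ∑ i ∈ Finset.range m, (f (x (K + i + 1)) - f (x (K + i))) := by
      exact (Finset.sum_range_sub (fun i => f (x (K + i))) m).symm
    calc |f (x (K + m)) - f (x K)|
        = |∑ i ∈ Finset.range m, (f (x (K + i + 1)) - f (x (K + i)))| := by rw [htel]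
      _ ≤ ∑ i ∈ Finset.range m, |f (x (K + i + 1)) - f (x (K + i))| :=
          Finset.abs_sum_le_sum_abs _ _
      _ ≤ ∑ i ∈ Finset.range m, Δ (K + i) * (‖g (x (K + i))‖ + L * Δ (K + i)) := by
          apply Finset.sum_le_sum
          intro i hi
          exact hfs i (by simp at hi; omega)
      _ ≤ ∑ i ∈ Finset.range (lhat + 1), Δ (K + i) * (‖g (x (K + i))‖ + L * Δ (K + i)) :=
          Finset.sum_le_sum_of_subset_of_nonneg
            (Finset.range_subset_range.mpr hm2) (fun i _ _ => hterm_nonneg i)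
  · set T := ∑ j ∈ Finset.range (lhat + 2), Δ (K + j) with hT
    have hT0 : 0 < T := Finset.sum_pos (fun j _ => hpos _) (by simp)
    -- distance drift
    have hdist : ∀ i ≤ lhat, ‖x (K + i) - x K‖ ≤ ∑ j ∈ Finset.range i, Δ (K + j) := by
      intro i hi
      induction i with
      | zero => simp
      | succ m ih =>
        have hm : m ≤ lhat := by omega
        calc ‖x (K + (m + 1)) - x K‖
            ≤ ‖x (K + m + 1) - x (K + m)‖ + ‖x (K + m) - x K‖ := by
              rw [show K + (m + 1) = K + m + 1 from rfl]
              exact norm_sub_le_norm_sub_add_norm_sub _ _ _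
          _ ≤ Δ (K + m) + ∑ j ∈ Finset.range m, Δ (K + j) :=
              add_le_add (hstep m hm) (ih hm)
          _ = ∑ j ∈ Finset.range (m + 1), Δ (K + j) := by
              rw [Finset.sum_range_succ]; ring
    -- each term is at most Δ_i * (‖g x_K‖ + L*T)
    have htermle : ∀ i ∈ Finset.range (lhat + 1),
        Δ (K + i) * (‖g (x (K + i))‖ + L * Δ (K + i)) ≤ Δ (K + i) * (‖g (x K)‖ + L * T) := by
      intro i hi
      simp only [Finset.mem_range] at hi
      have hile : i ≤ lhat := by omega
      have h1 : ‖g (x (K + i))‖ ≤ ‖g (x K)‖ + L * ∑ j ∈ Finset.range i, Δ (K + j) := by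
        have ha : ‖g (x (K + i))‖ - ‖g (x K)‖ ≤ ‖g (x (K + i)) - g (x K)‖ :=
          norm_sub_norm_le _ _
        have hb : ‖g (x (K + i)) - g (x K)‖ ≤ L * ‖x (K + i) - x K‖ := hLip _ _
        have hc := hdist i hile
        nlinarith
      have h2 : ∑ j ∈ Finset.range i, Δ (K + j) + Δ (K + i) ≤ T := by
        have : ∑ j ∈ Finset.range (i + 1), Δ (K + j) ≤ T :=
          Finset.sum_le_sum_of_subset_of_nonneg
            (Finset.range_subset_range.mpr (by omega)) (fun j _ _ => (hpos _).le)
        rw [Finset.sum_range_succ] at this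
        linarith
      have hL2 : L * (∑ j ∈ Finset.range i, Δ (K + j) + Δ (K + i)) ≤ L * T :=
        mul_le_mul_of_nonneg_left h2 hL.le
      have hsum' : ‖g (x (K + i))‖ + L * Δ (K + i) ≤ ‖g (x K)‖ + L * T := by
        rw [mul_add] at hL2; linarith
      exact mul_le_mul_of_nonneg_left hsum' (hpos (K + i)).le
    have hA : ∑ i ∈ Finset.range (lhat + 1), Δ (K + i) < S := by
      have : ∑ i ∈ Finset.range (lhat + 1), Δ (K + i) ≤ T :=
        Finset.sum_le_sum_of_subset_of_nonneg
          (Finset.range_subset_range.mpr (by omega)) (fun j _ _ => (hpos _).le)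
      linarith
    have hB0 : 0 < ‖g (x K)‖ + L * T := by
      have := norm_nonneg (g (x K)); nlinarith
    have hA0 : 0 ≤ ∑ i ∈ Finset.range (lhat + 1), Δ (K + i) :=
      Finset.sum_nonneg fun i _ => (hpos _).le
    calc ∑ i ∈ Finset.range (lhat + 1), Δ (K + i) * (‖g (x (K + i))‖ + L * Δ (K + i))
        ≤ ∑ i ∈ Finset.range (lhat + 1), Δ (K + i) * (‖g (x K)‖ + L * T) :=
          Finset.sum_le_sum htermle
      _ = (∑ i ∈ Finset.range (lhat + 1), Δ (K + i)) * (‖g (x K)‖ + L * T) :=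
          (Finset.sum_mul _ _ _).symm
      _ < S * (‖g (x K)‖ + L * T) := mul_lt_mul_of_pos_right hA hB0
      _ ≤ S * (‖g (x K)‖ + L * S) := by
          have : L * T ≤ L * S := mul_le_mul_of_nonneg_left hsum.le hL.le
          nlinarith
end
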